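/- Let m ≥ 8 be an integer and let k be an integer with 0 ≤ k ≤ m² − 4. Then P_{R(m)}(k) + P_{R(m)}(k+2) + P_{R(m)}(k−2) > 0 (where the term P_{R(m)}(k−2) is taken to be 0 when k < 2) if and only if k ∉ {1, 4, 6, 8, m²−12, m²−10, m²−8, m²−5}. -/

import Mathlib

/-!
A `t`-element subset of `R m = {5, 7, …, 2m - 1}` has a sum of the parity of `t` between
`t (t + 4) = 5 + 7 + ⋯ + (2t + 3)` and `t (2m - t) = (2m - 1) + ⋯ + (2m - 2t + 1)`, and every such
value occurs, because the sums of the `t`-element subsets of `{0, …, u - 1}` fill the interval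
`[C(t, 2), t u - C(t + 1, 2)]`. So the window `{k - 2, k, k + 2}` meets a subset sum iff some
`t ≡ k (mod 2)` with `t + 2 ≤ m` has `t (t + 4) ≤ k + 2` and `k ≤ t (2m - t) + 2`. The choice
`t ≈ √(k + 6) - 2` of the right parity works except at the bottom (`k = 1, 4, 6, 8`) and at the top,
where the gaps between `(m - 4)(m + 4) = m² - 16` and `(m - 2)(m + 2) = m² - 4`, and above
`(m - 3)(m + 3) = m² - 9`, are too wide.
-/

namespace SquareKronecker

/-- `R m`: the set `{5, 7, 9, …, 2m - 1}` of odd integers between `5` and `2m - 1`. -/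
def R (m : ℕ) : Finset ℕ :=
  (Finset.range (2 * m)).filter (fun j => Odd j ∧ 5 ≤ j)

/-- `P m j`: the number of subsets of `R m` whose elements sum to `j`
(so `P m 0 = 1`, counting the empty subset). -/
def P (m j : ℕ) : ℕ :=
  ((R m).powerset.filter (fun S => S.sum id = j)).card

end SquareKronecker

open Finset

theorem Nat.choose_two_add_one (n : ℕ) : (n + 1).choose 2 = n.choose 2 + n := by
  rw [Nat.choose_succ_succ, Nat.choose_one_right, add_comm]

theorem Nat.choose_two_mul_two_add_self (n : ℕ) : n.choose 2 * 2 + n = n * n := by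
  have h := Nat.add_one_mul_choose_eq n 1
  rw [Nat.choose_one_right, Nat.choose_two_add_one] at h
  linarith

theorem Nat.mul_self_mod_two (n : ℕ) : n * n % 2 = n % 2 := by
  rcases Nat.mod_two_eq_zero_or_one n with h | h <;> simp [Nat.mul_mod, h]

namespace Finset

theorem choose_card_two_le_sum (I : Finset ℕ) : (#I).choose 2 ≤ ∑ i ∈ I, i := by
  induction I using Finset.induction_on_max with
  | empty => simp
  | insert a s hlt ih =>
    have ha : a ∉ s := fun h => lt_irrefl a (hlt a h)
    have hcard : #s ≤ a := by
      simpa using card_le_card (fun x hx => mem_range.2 (hlt x hx) : s ⊆ range a)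
    rw [card_insert_of_notMem ha, sum_insert ha, Nat.choose_two_add_one]
    omega

theorem sum_add_choose_card_add_one_two_le {I : Finset ℕ} {u : ℕ} (h : I ⊆ range u) :
    ∑ i ∈ I, i + (#I + 1).choose 2 ≤ #I * u := by
  induction I using Finset.induction_on_max generalizing u with
  | empty => simp
  | insert a s hlt ih =>
    have ha : a ∉ s := fun h => lt_irrefl a (hlt a h)
    have hau : a + 1 ≤ u := mem_range.1 (h (mem_insert_self a s))
    have hs := ih (fun x hx => mem_range.2 (hlt x hx))
    rw [card_insert_of_notMem ha, sum_insert ha, Nat.choose_two_add_one]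
    nlinarith

theorem exists_subset_range_card_sum {u t s : ℕ} (htu : t ≤ u) (hs : t.choose 2 ≤ s)
    (hs' : s + (t + 1).choose 2 ≤ t * u) : ∃ I ⊆ range u, #I = t ∧ ∑ i ∈ I, i = s := by
  induction u generalizing t s with
  | zero =>
    obtain rfl : t = 0 := by omega
    exact ⟨∅, by simp, by simp, by simpa [eq_comm] using hs'⟩
  | succ u ih =>
    rcases t with _ | t
    · exact ⟨∅, by simp, by simp, by simpa [eq_comm] using hs'⟩
    rw [Nat.choose_two_add_one] at hs
    rw [Nat.choose_two_add_one, Nat.choose_two_add_one, add_mul, mul_add] at hs'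
    by_cases hu : u + t.choose 2 ≤ s
    · obtain ⟨I, hIu, hcard, hsum⟩ := ih (t := t) (s := s - u) (by omega) (by omega)
        (by rw [Nat.choose_two_add_one]; omega)
      have hI : u ∉ I := fun h => by simpa using hIu h
      refine ⟨insert u I, ?_, by rw [card_insert_of_notMem hI, hcard], ?_⟩
      · exact insert_subset (by simp) (hIu.trans (range_subset_range.2 (by omega)))
      · rw [sum_insert hI, hsum]
        omega
    · have htu' : t + 1 ≤ u := by omega
      have hchoose := Nat.choose_two_mul_two_add_self t
      have hmul : t * (t + 1) ≤ t * u := Nat.mul_le_mul_left t htu'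
      rw [mul_add] at hmul
      obtain ⟨I, hIu, hcard, hsum⟩ := ih (s := s) htu' (by rwa [Nat.choose_two_add_one])
        (by rw [Nat.choose_two_add_one, Nat.choose_two_add_one, add_mul]; omega)
      exact ⟨I, hIu.trans (range_subset_range.2 (by omega)), hcard, hsum⟩

theorem exists_subset_range_card_sum_iff (u t s : ℕ) :
    (∃ I ⊆ range u, #I = t ∧ ∑ i ∈ I, i = s) ↔
      t ≤ u ∧ t.choose 2 ≤ s ∧ s + (t + 1).choose 2 ≤ t * u := by
  constructor
  · rintro ⟨I, hI, rfl, rfl⟩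
    exact ⟨by simpa using card_le_card hI, choose_card_two_le_sum I,
      sum_add_choose_card_add_one_two_le hI⟩
  · rintro ⟨htu, hs, hs'⟩
    exact exists_subset_range_card_sum htu hs hs'

end Finset

namespace SquareKronecker

theorem R_eq_image (m : ℕ) : R m = (range (m - 2)).image (fun i => 2 * i + 5) := by
  ext x
  simp only [R, mem_filter, mem_range, mem_image, Nat.odd_iff]
  constructor
  · rintro ⟨hx, hodd, h5⟩
    exact ⟨(x - 5) / 2, by omega, by omega⟩
  · rintro ⟨i, hi, rfl⟩
    omega

theorem P_pos_iff_exists_subset_range (m j : ℕ) :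
    0 < P m j ↔ ∃ I ⊆ range (m - 2), 2 * ∑ i ∈ I, i + 5 * #I = j := by
  have hsum (I : Finset ℕ) :
      ∑ x ∈ I.image (fun i => 2 * i + 5), x = 2 * ∑ i ∈ I, i + 5 * #I := by
    rw [sum_image (fun a _ b _ h => by omega), sum_add_distrib, mul_sum, sum_const,
      smul_eq_mul, mul_comm 5]
  simp only [P, card_pos, filter_nonempty_iff, mem_powerset, R_eq_image, subset_image_iff, id]
  constructor
  · rintro ⟨_, ⟨I, hI, rfl⟩, rfl⟩
    exact ⟨I, hI, (hsum I).symm⟩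
  · rintro ⟨I, hI, rfl⟩
    exact ⟨_, ⟨I, hI, rfl⟩, hsum I⟩

theorem P_pos_iff {m : ℕ} (hm : 2 ≤ m) (j : ℕ) :
    0 < P m j ↔ ∃ t, t + 2 ≤ m ∧ t % 2 = j % 2 ∧ t * (t + 4) ≤ j ∧ j + t * t ≤ 2 * t * m := by
  have hcard_sum : (∃ I ⊆ range (m - 2), 2 * ∑ i ∈ I, i + 5 * #I = j) ↔
      ∃ t s, (∃ I ⊆ range (m - 2), #I = t ∧ ∑ i ∈ I, i = s) ∧ 2 * s + 5 * t = j :=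
    ⟨fun ⟨I, hI, h⟩ => ⟨#I, _, ⟨I, hI, rfl, rfl⟩, h⟩,
      fun ⟨_, _, ⟨I, hI, ht, hs⟩, h⟩ => ⟨I, hI, by rw [ht, hs, h]⟩⟩
  simp only [P_pos_iff_exists_subset_range, hcard_sum, exists_subset_range_card_sum_iff]
  clear hcard_sum
  have hmul (t : ℕ) : t * (m - 2) + 2 * t = t * m := by
    rw [mul_comm 2 t, ← mul_add, Nat.sub_add_cancel hm]
  constructor
  · rintro ⟨t, s, ⟨htm, hs, hs'⟩, rfl⟩
    have hchoose := Nat.choose_two_mul_two_add_self t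
    have hmul_t := hmul t
    rw [Nat.choose_two_add_one] at hs'
    refine ⟨t, by omega, by omega, ?_, ?_⟩
    · rw [mul_add]
      omega
    · rw [mul_assoc]
      omega
  · rintro ⟨t, htm, hpar, hlow, hhigh⟩
    have hchoose := Nat.choose_two_mul_two_add_self t
    have hmul_t := hmul t
    rw [mul_add] at hlow
    rw [mul_assoc] at hhigh
    refine ⟨t, (j - 5 * t) / 2, ⟨by omega, by omega, ?_⟩, by omega⟩
    rw [Nat.choose_two_add_one]
    omega

theorem pos_window_iff (f : ℕ → ℕ) (k : ℕ) :
    0 < f k + f (k + 2) + (if k < 2 then 0 else f (k - 2)) ↔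
      ∃ j, 0 < f j ∧ (j = k ∨ j = k + 2 ∨ j + 2 = k) := by
  constructor
  · intro h
    by_contra hne
    have hzero (j : ℕ) (hj : j = k ∨ j = k + 2 ∨ j + 2 = k) : f j = 0 :=
      Nat.eq_zero_of_not_pos fun hpos => hne ⟨j, hpos, hj⟩
    have hk := hzero k (by omega)
    have hk2 := hzero (k + 2) (by omega)
    split_ifs at h with hk_lt
    · omega
    · have := hzero (k - 2) (by omega)
      omega
  · rintro ⟨j, hj, rfl | rfl | rfl⟩ <;> split_ifs <;> simp_all

theorem window_pos_iff {m : ℕ} (hm : 2 ≤ m) (k : ℕ) :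
    0 < P m k + P m (k + 2) + (if k < 2 then 0 else P m (k - 2)) ↔
      ∃ t, t + 2 ≤ m ∧ t % 2 = k % 2 ∧ t * (t + 4) ≤ k + 2 ∧ k + t * t ≤ 2 * t * m + 2 := by
  rw [pos_window_iff]
  simp only [P_pos_iff hm]
  constructor
  · rintro ⟨j, ⟨t, htm, hpar, hlow, hhigh⟩, hj⟩
    exact ⟨t, htm, by omega, by omega, by omega⟩
  · rintro ⟨t, htm, hpar, hlow, hhigh⟩
    have hlen : t * (t + 2) ≤ t * m := Nat.mul_le_mul_left t (by omega)
    have hsq := Nat.mul_self_mod_two t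
    rw [mul_add] at hlow hlen
    rw [mul_assoc] at hhigh
    -- clamp `k` into the parity class `[t (t + 4), t (2m - t)]`
    by_cases hk_high : k + t * t ≤ 2 * (t * m)
    · by_cases hk_low : t * t + t * 4 ≤ k
      · exact ⟨k, ⟨t, htm, hpar, by rw [mul_add]; omega, by rw [mul_assoc]; omega⟩, by omega⟩
      · exact ⟨k + 2, ⟨t, htm, by omega, by rw [mul_add]; omega, by rw [mul_assoc]; omega⟩,
          by omega⟩
    · exact ⟨k - 2, ⟨t, htm, by omega, by rw [mul_add]; omega, by rw [mul_assoc]; omega⟩,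
        by omega⟩

theorem eq_add_two_or_eq_add_three_of_sq_le {m t k : ℕ} (ht : t + 2 ≤ m)
    (hhigh : k + t * t ≤ 2 * t * m + 2) (htop : m ^ 2 ≤ k + 12) : m = t + 2 ∨ m = t + 3 := by
  obtain ⟨d, rfl⟩ := Nat.exists_eq_add_of_le ht
  have : d ≤ 1 := by nlinarith
  omega

theorem notMem_exceptional_of_window {m k t : ℕ} (hm : 5 ≤ m) (ht : t + 2 ≤ m) (hpar : t % 2 = k % 2)
    (hlow : t * (t + 4) ≤ k + 2) (hhigh : k + t * t ≤ 2 * t * m + 2) :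
    k ∉ ({1, 4, 6, 8, m ^ 2 - 12, m ^ 2 - 10, m ^ 2 - 8, m ^ 2 - 5} : Finset ℕ) := by
  have hsq := Nat.mul_self_mod_two t
  simp only [mem_insert, mem_singleton]
  intro hk
  by_cases hsmall : k ≤ 8
  · have hm2 : 25 ≤ m ^ 2 := by nlinarith
    have ht1 : t ≤ 1 := by nlinarith
    interval_cases t <;> omega
  · have htop : m ^ 2 ≤ k + 12 := by omega
    rw [mul_add] at hlow
    obtain rfl | rfl := eq_add_two_or_eq_add_three_of_sq_le ht hhigh htop
    · have hsq_m : (t + 2) ^ 2 = t * t + 4 * t + 4 := by ring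
      omega
    · have hsq_m : (t + 3) ^ 2 = t * t + 6 * t + 9 := by ring
      have hmul_m : 2 * t * (t + 3) = 2 * (t * t) + 6 * t := by ring
      omega

theorem exists_mod_two_eq_sq_le_lt {k : ℕ} (hk : k ≠ 1) :
    ∃ t, t % 2 = k % 2 ∧ (t + 2) ^ 2 ≤ k + 6 ∧ k + 6 < (t + 4) ^ 2 := by
  obtain ⟨s, hs⟩ : ∃ s, Nat.sqrt (k + 6) = s + 2 :=
    Nat.exists_eq_add_of_le' (Nat.le_sqrt'.2 (by omega))
  have hle : (s + 2) ^ 2 ≤ k + 6 := hs ▸ Nat.sqrt_le' (k + 6)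
  have hlt : k + 6 < (s + 3) ^ 2 := by simpa [hs] using Nat.lt_succ_sqrt' (k + 6)
  by_cases hpar : s % 2 = k % 2
  · exact ⟨s, hpar, hle, hlt.trans_le (Nat.pow_le_pow_left (by omega) 2)⟩
  · obtain ⟨t, rfl⟩ : ∃ t, s = t + 1 := Nat.exists_eq_add_of_le' (by
      by_contra h0
      obtain rfl : s = 0 := by omega
      omega)
    exact ⟨t, by omega, (Nat.pow_le_pow_left (by omega) 2).trans hle, hlt⟩

theorem window_of_notMem_exceptional {m k t : ℕ} (hm : 8 ≤ m) (hk : k ≤ m ^ 2 - 4)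
    (hE : k ∉ ({1, 4, 6, 8, m ^ 2 - 12, m ^ 2 - 10, m ^ 2 - 8, m ^ 2 - 5} : Finset ℕ))
    (hpar : t % 2 = k % 2) (hlow : (t + 2) ^ 2 ≤ k + 6) (hup : k + 6 < (t + 4) ^ 2) :
    t + 2 ≤ m ∧ k + t * t ≤ 2 * t * m + 2 := by
  have hsq := Nat.mul_self_mod_two t
  simp only [mem_insert, mem_singleton, not_or] at hE
  have hk' : k + 4 ≤ m ^ 2 := by
    have : 64 ≤ m ^ 2 := by nlinarith
    omega
  have htm : t + 2 ≤ m := by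
    have : (t + 2) ^ 2 < (m + 1) ^ 2 := by nlinarith
    have := lt_of_pow_lt_pow_left₀ 2 (by positivity) this
    omega
  refine ⟨htm, ?_⟩
  have h4 : (t + 4) ^ 2 = t * t + 8 * t + 16 := by ring
  obtain ⟨d, rfl⟩ := Nat.exists_eq_add_of_le htm
  have hexp : 2 * t * (t + 2 + d) = 2 * (t * t) + 4 * t + 2 * (t * d) := by ring
  have hsqm : (t + 2 + d) ^ 2 = t * t + 4 * t + 4 + 2 * (t * d) + (4 * d + d * d) := by ring
  rcases Nat.lt_or_ge d 3 with hd | hd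
  · interval_cases d <;> omega
  · rcases Nat.lt_or_ge t 3 with ht | ht
    · interval_cases t <;> omega
    · have : 3 * t ≤ t * d := by nlinarith
      omega

/-- Let `m ≥ 8` and `0 ≤ k ≤ m² - 4`. Then `P_{R(m)}(k) + P_{R(m)}(k+2) + P_{R(m)}(k-2) > 0`
(where the term `P_{R(m)}(k-2)` is taken to be `0` when `k < 2`) if and only if
`k ∉ {1, 4, 6, 8, m² - 12, m² - 10, m² - 8, m² - 5}`. -/
theorem P_pos_iff_two (m k : ℕ) (hm : 8 ≤ m) (hk : k ≤ m ^ 2 - 4) :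
    0 < P m k + P m (k + 2) + (if k < 2 then 0 else P m (k - 2)) ↔
      k ∉ ({1, 4, 6, 8, m ^ 2 - 12, m ^ 2 - 10, m ^ 2 - 8, m ^ 2 - 5} : Finset ℕ) := by
  rw [window_pos_iff (by omega)]
  constructor
  · rintro ⟨t, ht, hpar, hlow, hhigh⟩
    exact notMem_exceptional_of_window (by omega) ht hpar hlow hhigh
  · intro hE
    obtain ⟨t, hpar, hlow, hup⟩ := exists_mod_two_eq_sq_le_lt (k := k) (by rintro rfl; simp at hE)
    obtain ⟨ht, hhigh⟩ := window_of_notMem_exceptional hm hk hE hpar hlow hup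
    exact ⟨t, ht, hpar, by nlinarith, hhigh⟩

end SquareKronecker
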